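/- arXiv:math/0703732 — 3 statements merged into one kernel-verified Lean document; each statement's English description precedes it below -/
import Mathlib

section
/- Let (X,d,μ) be a space of homogeneous type with μ(B) ≥ c r(B)^n for all balls B. Let 0<α<n and 1/q = 1 − α/n. Then for every w ∈ A_{1,q}(μ), the fractional maximal operator M_α is bounded from L^1(w dμ) to weak-L^q(w^q dμ): for every λ>0, w^q({x ∈ X : M_α f(x) > λ}) ≤ C λ^{−q} (∫_X |f| w dμ)^{q}. -/
open MeasureTheory Metric Set ENNReal NNReal

noncomputable section

variable {X : Type*} [MetricSpace X] [MeasurableSpace X] [BorelSpace X]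

/-- Average of an `ℝ≥0∞`-valued function over a ball, w.r.t. `μ`. -/
def avgBX (μ : Measure X) (c : X) (r : ℝ) (g : X → ℝ≥0∞) : ℝ≥0∞ :=
  (μ (ball c r))⁻¹ * ∫⁻ y in ball c r, g y ∂μ

/-- `(X, d, μ)` is a space of homogeneous type: balls have positive finite measure
and `μ` is doubling. -/
def IsSHT (μ : Measure X) : Prop :=
  (∀ (c : X) (r : ℝ), 0 < r → μ (ball c r) < ∞) ∧
  (∀ (c : X) (r : ℝ), 0 < r → 0 < μ (ball c r)) ∧
  ∃ D : ℝ≥0, ∀ (c : X) (r : ℝ), 0 < r → μ (ball c (2 * r)) ≤ D * μ (ball c r)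

/-- Polynomial growth from below: `μ(B) ≥ c r(B)^n`. -/
def GrowthGE (μ : Measure X) (cl nd : ℝ) : Prop :=
  ∀ (x : X) (r : ℝ), 0 < r → ENNReal.ofReal (cl * r ^ nd) ≤ μ (ball x r)

/-- Fractional maximal operator `M_β` on `(X, μ)` (`β = 0` gives the
Hardy–Littlewood maximal operator). -/
def maxFX (μ : Measure X) (β : ℝ) (g : X → ℝ≥0∞) (x : X) : ℝ≥0∞ :=
  ⨆ (c : X) (r : ℝ) (_ : 0 < r) (_ : x ∈ ball c r),
    ENNReal.ofReal (r ^ β) * avgBX μ c r g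

/-- The `A_{p,q}(μ)` condition for `1 < p ≤ q < ∞`. -/
def ApqX (μ : Measure X) (p q : ℝ) (w : X → ℝ) : Prop :=
  ∃ C : ℝ≥0, ∀ (c : X) (r : ℝ), 0 < r →
    (avgBX μ c r (fun x => ENNReal.ofReal (w x ^ q))) ^ (1 / q) *
      (avgBX μ c r (fun x => ENNReal.ofReal (w x ^ (-(p / (p - 1)))))) ^ (1 - 1 / p) ≤ C

/-- The `A_{1,q}(μ)` condition. -/
def A1qX (μ : Measure X) (q : ℝ) (w : X → ℝ) : Prop :=
  ∃ C : ℝ≥0, ∀ (c : X) (r : ℝ), 0 < r →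
    ∀ᵐ x ∂(μ.restrict (ball c r)),
      (avgBX μ c r (fun y => ENNReal.ofReal (w y ^ q))) ^ (1 / q) ≤ C * ENNReal.ofReal (w x)

/-- A doubling weight: the measure `w dμ` is doubling. -/
def WeightDoubling (μ : Measure X) (w : X → ℝ) : Prop :=
  ∃ D : ℝ≥0, ∀ (c : X) (r : ℝ), 0 < r →
    (∫⁻ x in ball c (2 * r), ENNReal.ofReal (w x) ∂μ) ≤
      D * ∫⁻ x in ball c r, ENNReal.ofReal (w x) ∂μ

/-- The fractional integral operator `T_α` applied to an `ℝ≥0∞`-valued function. -/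
def TalphaE (μ : Measure X) (α : ℝ) (g : X → ℝ≥0∞) (x : X) : ℝ≥0∞ :=
  ∫⁻ y, (ENNReal.ofReal (dist x y ^ α) / μ (ball x (dist x y))) * g y ∂μ

/-- The fractional integral operator `T_α` on real-valued functions. -/
def TalphaR (μ : Measure X) (α : ℝ) (f : X → ℝ) (x : X) : ℝ :=
  ∫ y, (dist x y ^ α / (μ (ball x (dist x y))).toReal) * f y ∂μ


/-- For `q ≥ 1`, `ℓ¹ ⊆ ℓ^q` for `ℝ≥0∞`-valued families. -/
lemma tsum_rpow_le_rpow_tsum {ι : Type*} (a : ι → ℝ≥0∞) {q : ℝ} (hq : 1 ≤ q) :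
    ∑' i, a i ^ q ≤ (∑' i, a i) ^ q := by
  have hq0 : (0 : ℝ) < q := by linarith
  set S := ∑' i, a i with hS
  by_cases hStop : S = ∞
  · rw [hStop, ENNReal.top_rpow_of_pos hq0]; exact le_top
  have key : ∀ i, a i ^ q ≤ S ^ (q - 1) * a i := by
    intro i
    by_cases h0 : a i = 0
    · simp [h0, ENNReal.zero_rpow_of_pos hq0]
    · have hle : a i ≤ S := ENNReal.le_tsum i
      have hne : a i ≠ ∞ := fun h => hStop (top_le_iff.1 (h ▸ hle))
      calc a i ^ q = a i ^ (q - 1) * a i := by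
            conv_lhs => rw [show q = q - 1 + 1 by ring]
            rw [ENNReal.rpow_add _ _ h0 hne, ENNReal.rpow_one]
        _ ≤ S ^ (q - 1) * a i :=
            mul_le_mul_left (ENNReal.rpow_le_rpow hle (by linarith)) _
  calc ∑' i, a i ^ q ≤ ∑' i, S ^ (q - 1) * a i := ENNReal.tsum_le_tsum key
    _ = S ^ (q - 1) * S := by rw [ENNReal.tsum_mul_left]
    _ = S ^ q := by
        by_cases hS0 : S = 0
        · simp [hS0, ENNReal.zero_rpow_of_pos hq0]
        · conv_rhs => rw [show q = q - 1 + 1 by ring]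
          rw [ENNReal.rpow_add _ _ hS0 hStop, ENNReal.rpow_one]

theorem statement11
    (μ : Measure X) (hμ : IsSHT μ)
    (cl nd : ℝ) (hcl : 0 < cl) (hnd : 0 < nd) (hgrowth : GrowthGE μ cl nd)
    (α q : ℝ) (hα0 : 0 < α) (hαn : α < nd)
    (hq : 1 / q = 1 - α / nd)
    (w : X → ℝ) (hw0 : ∀ x, 0 ≤ w x)
    (hwdbl : WeightDoubling μ w ∧ WeightDoubling μ (fun x => w x ^ q))
    (hA1q : A1qX μ q w) :
    ∃ C : ℝ≥0, ∀ f : X → ℝ, ∀ lam : ℝ, 0 < lam →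
      (∫⁻ x in {x : X | ENNReal.ofReal lam < maxFX μ α (fun y => (‖f y‖₊ : ℝ≥0∞)) x},
          ENNReal.ofReal (w x ^ q) ∂μ) ≤
        C * ((ENNReal.ofReal lam) ^ q)⁻¹ *
          (∫⁻ x, (‖f x‖₊ : ℝ≥0∞) * ENNReal.ofReal (w x) ∂μ) ^ q := by
  classical
  obtain ⟨hfin, hpos, D, hD⟩ := hμ
  obtain ⟨Dw0, hDw0⟩ := hwdbl.2
  obtain ⟨CA0, hCA0⟩ := hA1q
  set CA : ℝ≥0 := CA0 + 1 with hCAdef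
  set Dw : ℝ≥0 := Dw0 + 1 with hDwdef
  have hCA0' : (CA : ℝ≥0∞) ≠ 0 := by
    simp [hCAdef]
  have hCAt : (CA : ℝ≥0∞) ≠ ∞ := ENNReal.coe_ne_top
  -- facts about q
  have hβ1 : α / nd < 1 := (div_lt_one hnd).2 hαn
  have hβ0 : 0 < α / nd := div_pos hα0 hnd
  have hq0 : 0 < q := by
    by_contra h
    push_neg at h
    rcases eq_or_lt_of_le h with h' | h'
    · rw [h'] at hq; simp at hq; linarith
    · have h2 : 1 / q < 0 := div_neg_of_pos_of_neg one_pos h'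
      rw [hq] at h2; linarith
  have hq1 : 1 < q := by
    have h1q : 1 / q < 1 := by rw [hq]; linarith
    exact (div_lt_one hq0).1 h1q
  have hkey : α * q = nd * (q - 1) := by
    have hqne : q ≠ 0 := hq0.ne'
    have hndne : nd ≠ 0 := hnd.ne'
    field_simp at hq
    nlinarith [hq]
  have hq1' : (0:ℝ) ≤ q - 1 := by linarith
  -- constants
  set C1 : ℝ≥0∞ := (CA : ℝ≥0∞) ^ q * ENNReal.ofReal cl ^ (1 - q) with hC1def
  have hclpos : 0 < ENNReal.ofReal cl := ENNReal.ofReal_pos.2 hcl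
  have hclne : ENNReal.ofReal cl ≠ 0 := hclpos.ne'
  have hclt : ENNReal.ofReal cl ≠ ∞ := ENNReal.ofReal_ne_top
  have hC1ne : C1 ≠ ∞ := by
    refine ENNReal.mul_ne_top (ENNReal.rpow_ne_top_of_nonneg hq0.le hCAt) ?_
    simp only [ne_eq, ENNReal.rpow_eq_top_iff, not_or, not_and, not_lt]
    exact ⟨fun h => absurd h hclne, fun h => absurd h hclt⟩
  set Ctot : ℝ≥0∞ := (Dw : ℝ≥0∞) ^ 3 * C1 with hCtotdef
  have hCtotne : Ctot ≠ ∞ :=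
    ENNReal.mul_ne_top (by simp) hC1ne
  refine ⟨Ctot.toNNReal, fun f lam hlam => ?_⟩
  rw [ENNReal.coe_toNNReal hCtotne]
  cases isEmpty_or_nonempty X with
  | inl hX =>
    simp [Measure.eq_zero_of_isEmpty μ]
  | inr hX =>
  obtain ⟨x0⟩ := hX
  haveI : SigmaFinite μ := by
    refine ⟨⟨⟨fun n => ball x0 (n + 1), fun _ => mem_univ _,
      fun n => hfin x0 (n + 1) (by positivity), ?_⟩⟩⟩
    refine eq_univ_of_forall fun y => mem_iUnion.2 ?_
    obtain ⟨n, hn⟩ := exists_nat_gt (dist y x0)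
    exact ⟨n, by simp only [mem_ball]; linarith⟩
  have hlamE0 : ENNReal.ofReal lam ≠ 0 := by simp [hlam]
  have hlamEt : ENNReal.ofReal lam ≠ ∞ := ENNReal.ofReal_ne_top
  have hlq0 : ENNReal.ofReal lam ^ q ≠ 0 :=
    (ENNReal.rpow_pos (pos_iff_ne_zero.2 hlamE0) hlamEt).ne'
  have hlqt : ENNReal.ofReal lam ^ q ≠ ∞ := ENNReal.rpow_ne_top_of_nonneg hq0.le hlamEt
  -- Step B : the key estimate on a single ball
  have keyB : ∀ (c : X) (r : ℝ), 0 < r →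
      ENNReal.ofReal lam ≤ ENNReal.ofReal (r ^ α) * avgBX μ c r (fun y => (‖f y‖₊ : ℝ≥0∞)) →
      (∫⁻ x in ball c r, ENNReal.ofReal (w x ^ q) ∂μ) ≤
        C1 * (ENNReal.ofReal lam ^ q)⁻¹ *
          (∫⁻ x in ball c r, (‖f x‖₊ : ℝ≥0∞) * ENNReal.ofReal (w x) ∂μ) ^ q := by
    intro c r hr hball
    have hμB0 : μ (ball c r) ≠ 0 := (hpos c r hr).ne'
    have hμBt : μ (ball c r) ≠ ∞ := (hfin c r hr).ne
    set A : ℝ≥0∞ := avgBX μ c r (fun y => ENNReal.ofReal (w y ^ q)) with hAdef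
    have hIq : (∫⁻ x in ball c r, ENNReal.ofReal (w x ^ q) ∂μ) = μ (ball c r) * A := by
      rw [hAdef]
      unfold avgBX
      rw [← mul_assoc, ENNReal.mul_inv_cancel hμB0 hμBt, one_mul]
    by_cases hA0 : A = 0
    · rw [hIq, hA0, mul_zero]; exact zero_le
    have hae : ∀ᵐ x ∂(μ.restrict (ball c r)),
        A ^ (1/q) ≤ (CA : ℝ≥0∞) * ENNReal.ofReal (w x) := by
      filter_upwards [hCA0 c r hr] with x hx
      refine le_trans hx (mul_le_mul_left ?_ _)
      exact_mod_cast (self_le_add_right CA0 1)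
    haveI : (ae (μ.restrict (ball c r))).NeBot :=
      ae_neBot.2 fun h => hμB0 (Measure.restrict_eq_zero.1 h)
    obtain ⟨x₁, hx₁⟩ := hae.exists
    have hA1t : A ^ (1/q) ≠ ∞ :=
      (hx₁.trans_lt (ENNReal.mul_ne_top ENNReal.coe_ne_top ENNReal.ofReal_ne_top).lt_top).ne
    have hArec : (A ^ (1/q)) ^ q = A := by
      rw [← ENNReal.rpow_mul, one_div, inv_mul_cancel₀ hq0.ne', ENNReal.rpow_one]
    have hAt : A ≠ ∞ := by
      rw [← hArec]; exact ENNReal.rpow_ne_top_of_nonneg hq0.le hA1t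
    have hconst_ne : (CA:ℝ≥0∞)⁻¹ * A ^ (1/q) ≠ ∞ :=
      ENNReal.mul_ne_top (by simp [hCA0']) hA1t
    have h1 : ((CA:ℝ≥0∞)⁻¹ * A ^ (1/q)) * (∫⁻ x in ball c r, (‖f x‖₊:ℝ≥0∞) ∂μ) ≤
        ∫⁻ x in ball c r, (‖f x‖₊:ℝ≥0∞) * ENNReal.ofReal (w x) ∂μ := by
      rw [← lintegral_const_mul' _ _ hconst_ne]
      refine lintegral_mono_ae ?_
      filter_upwards [hae] with x hx
      calc ((CA:ℝ≥0∞)⁻¹ * A ^ (1/q)) * (‖f x‖₊:ℝ≥0∞)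
          ≤ ((CA:ℝ≥0∞)⁻¹ * ((CA:ℝ≥0∞) * ENNReal.ofReal (w x))) * (‖f x‖₊:ℝ≥0∞) := by
            gcongr
        _ = (‖f x‖₊:ℝ≥0∞) * ENNReal.ofReal (w x) := by
            rw [← mul_assoc, ENNReal.inv_mul_cancel hCA0' hCAt, one_mul, mul_comm]
    set Rα : ℝ≥0∞ := ENNReal.ofReal (r ^ α) with hRαdef
    have hRα0 : Rα ≠ 0 := by
      simp only [hRαdef, ne_eq, ENNReal.ofReal_eq_zero, not_le]
      exact Real.rpow_pos_of_pos hr α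
    have hRαt : Rα ≠ ∞ := ENNReal.ofReal_ne_top
    have h2 : ENNReal.ofReal lam * μ (ball c r) * Rα⁻¹ ≤
        ∫⁻ x in ball c r, (‖f x‖₊:ℝ≥0∞) ∂μ := by
      simp only [avgBX] at hball
      calc ENNReal.ofReal lam * μ (ball c r) * Rα⁻¹
          ≤ (Rα * ((μ (ball c r))⁻¹ * ∫⁻ x in ball c r, (‖f x‖₊:ℝ≥0∞) ∂μ)) *
              μ (ball c r) * Rα⁻¹ := by gcongr
        _ = (∫⁻ x in ball c r, (‖f x‖₊:ℝ≥0∞) ∂μ) * (Rα * Rα⁻¹) *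
              ((μ (ball c r))⁻¹ * μ (ball c r)) := by ring
        _ = ∫⁻ x in ball c r, (‖f x‖₊:ℝ≥0∞) ∂μ := by
            rw [ENNReal.mul_inv_cancel hRα0 hRαt, ENNReal.inv_mul_cancel hμB0 hμBt,
              mul_one, mul_one]
    -- the geometric estimate
    have hgeo : ENNReal.ofReal cl ^ (q-1) * Rα ^ q ≤ μ (ball c r) ^ (q-1) := by
      have e1 : Rα ^ q = (ENNReal.ofReal r ^ nd) ^ (q-1) := by
        rw [hRαdef, ← ENNReal.ofReal_rpow_of_pos hr, ← ENNReal.rpow_mul, hkey,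
          ENNReal.rpow_mul]
      calc ENNReal.ofReal cl ^ (q-1) * Rα ^ q
          = (ENNReal.ofReal cl * ENNReal.ofReal r ^ nd) ^ (q-1) := by
            rw [e1, ← ENNReal.mul_rpow_of_nonneg _ _ hq1']
        _ = (ENNReal.ofReal (cl * r ^ nd)) ^ (q-1) := by
            rw [ENNReal.ofReal_mul hcl.le, ENNReal.ofReal_rpow_of_pos hr]
        _ ≤ μ (ball c r) ^ (q-1) := ENNReal.rpow_le_rpow (hgrowth c r hr) hq1'
    have hRq0 : Rα ^ q ≠ 0 := (ENNReal.rpow_pos (pos_iff_ne_zero.2 hRα0) hRαt).ne'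
    have hRqt : Rα ^ q ≠ ∞ := ENNReal.rpow_ne_top_of_nonneg hq0.le hRαt
    have hiii : μ (ball c r) ≤
        ENNReal.ofReal cl ^ (1-q) * (Rα ^ q)⁻¹ * μ (ball c r) ^ q := by
      calc μ (ball c r)
          = (ENNReal.ofReal cl ^ (1-q) * ENNReal.ofReal cl ^ (q-1)) *
              ((Rα^q)⁻¹ * Rα^q) * μ (ball c r) := by
            rw [← ENNReal.rpow_add _ _ hclne hclt, ENNReal.inv_mul_cancel hRq0 hRqt]
            norm_num
        _ = ENNReal.ofReal cl ^ (1-q) * (Rα^q)⁻¹ *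
              (ENNReal.ofReal cl ^ (q-1) * Rα^q * μ (ball c r)) := by ring
        _ ≤ ENNReal.ofReal cl ^ (1-q) * (Rα^q)⁻¹ *
              (μ (ball c r) ^ (q-1) * μ (ball c r)) := by gcongr
        _ = ENNReal.ofReal cl ^ (1-q) * (Rα^q)⁻¹ * μ (ball c r) ^ q := by
            congr 1
            conv_rhs => rw [show q = (q-1)+1 by ring]
            rw [ENNReal.rpow_add _ _ hμB0 hμBt, ENNReal.rpow_one]
    have hCAq0 : (CA:ℝ≥0∞) ^ q ≠ 0 :=
      (ENNReal.rpow_pos (pos_iff_ne_zero.2 hCA0') hCAt).ne'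
    have hCAqt : (CA:ℝ≥0∞) ^ q ≠ ∞ := ENNReal.rpow_ne_top_of_nonneg hq0.le hCAt
    have h3 : ((CA:ℝ≥0∞)⁻¹)^q * A * (ENNReal.ofReal lam)^q * μ (ball c r)^q * (Rα⁻¹)^q ≤
        (∫⁻ x in ball c r, (‖f x‖₊:ℝ≥0∞) * ENNReal.ofReal (w x) ∂μ) ^ q := by
      have e : ((CA:ℝ≥0∞)⁻¹)^q * A * (ENNReal.ofReal lam)^q * μ (ball c r)^q * (Rα⁻¹)^q
          = (((CA:ℝ≥0∞)⁻¹ * A^(1/q)) * (ENNReal.ofReal lam * μ (ball c r) * Rα⁻¹)) ^ q := by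
        rw [ENNReal.mul_rpow_of_nonneg _ _ hq0.le, ENNReal.mul_rpow_of_nonneg _ _ hq0.le,
            ENNReal.mul_rpow_of_nonneg _ _ hq0.le, ENNReal.mul_rpow_of_nonneg _ _ hq0.le,
            hArec]
        ring
      rw [e]
      refine ENNReal.rpow_le_rpow ?_ hq0.le
      calc ((CA:ℝ≥0∞)⁻¹ * A^(1/q)) * (ENNReal.ofReal lam * μ (ball c r) * Rα⁻¹)
          ≤ ((CA:ℝ≥0∞)⁻¹ * A^(1/q)) * ∫⁻ x in ball c r, (‖f x‖₊:ℝ≥0∞) ∂μ :=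
            mul_le_mul_right h2 _
        _ ≤ _ := h1
    have heq : C1 * (ENNReal.ofReal lam ^ q)⁻¹ *
        (((CA:ℝ≥0∞)⁻¹)^q * A * (ENNReal.ofReal lam)^q * μ (ball c r)^q * (Rα⁻¹)^q)
        = (ENNReal.ofReal cl ^ (1-q) * (Rα^q)⁻¹ * μ (ball c r)^q) * A := by
      rw [hC1def, ENNReal.inv_rpow, ENNReal.inv_rpow]
      calc ((CA:ℝ≥0∞)^q * ENNReal.ofReal cl ^ (1-q)) * (ENNReal.ofReal lam ^ q)⁻¹ *
            (((CA:ℝ≥0∞)^q)⁻¹ * A * (ENNReal.ofReal lam)^q * μ (ball c r)^q * (Rα^q)⁻¹)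
          = (ENNReal.ofReal cl ^ (1-q) * (Rα^q)⁻¹ * μ (ball c r)^q) * A *
              (((CA:ℝ≥0∞)^q * ((CA:ℝ≥0∞)^q)⁻¹) *
                ((ENNReal.ofReal lam ^ q)⁻¹ * ENNReal.ofReal lam ^ q)) := by ring
        _ = (ENNReal.ofReal cl ^ (1-q) * (Rα^q)⁻¹ * μ (ball c r)^q) * A := by
            rw [ENNReal.mul_inv_cancel hCAq0 hCAqt, ENNReal.inv_mul_cancel hlq0 hlqt,
              one_mul, mul_one]
    rw [hIq]
    calc μ (ball c r) * A
        ≤ (ENNReal.ofReal cl ^ (1-q) * (Rα^q)⁻¹ * μ (ball c r)^q) * A :=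
          mul_le_mul_left hiii _
      _ = C1 * (ENNReal.ofReal lam ^ q)⁻¹ *
            (((CA:ℝ≥0∞)⁻¹)^q * A * (ENNReal.ofReal lam)^q * μ (ball c r)^q * (Rα⁻¹)^q) :=
          heq.symm
      _ ≤ C1 * (ENNReal.ofReal lam ^ q)⁻¹ *
            (∫⁻ x in ball c r, (‖f x‖₊:ℝ≥0∞) * ENNReal.ofReal (w x) ∂μ) ^ q :=
          mul_le_mul_right h3 _
  -- the covering argument
  set ν : Measure X := μ.withDensity (fun x => ENNReal.ofReal (w x ^ q)) with hνdef
  set t : ℕ → Set (X × ℝ) := fun m =>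
    {p : X × ℝ | 0 < p.2 ∧ p.2 ≤ (m : ℝ) ∧
      ENNReal.ofReal lam <
        ENNReal.ofReal (p.2 ^ α) * avgBX μ p.1 p.2 (fun y => (‖f y‖₊ : ℝ≥0∞))} with htdef
  set Em : ℕ → Set X := fun m => ⋃ p ∈ t m, ball p.1 p.2 with hEmdef
  have hEsub : {x : X | ENNReal.ofReal lam < maxFX μ α (fun y => (‖f y‖₊ : ℝ≥0∞)) x} ⊆
      ⋃ m, Em m := by
    intro x hx
    simp only [mem_setOf_eq, maxFX] at hx
    obtain ⟨c, hc⟩ := lt_iSup_iff.1 hx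
    obtain ⟨r, hr2⟩ := lt_iSup_iff.1 hc
    obtain ⟨hrpos, hr3⟩ := lt_iSup_iff.1 hr2
    obtain ⟨hxb, hlt⟩ := lt_iSup_iff.1 hr3
    exact mem_iUnion.2 ⟨⌈r⌉₊, mem_iUnion₂.2 ⟨(c, r), ⟨hrpos, Nat.le_ceil r, hlt⟩, hxb⟩⟩
  have hEmmono : Monotone Em := by
    intro m n hmn
    refine iUnion₂_mono' fun p hp => ⟨p, ⟨hp.1, hp.2.1.trans ?_, hp.2.2⟩, subset_rfl⟩
    exact_mod_cast Nat.cast_le.2 hmn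
  have hEmbound : ∀ m : ℕ, ν (Em m) ≤ Ctot * (ENNReal.ofReal lam ^ q)⁻¹ *
      (∫⁻ x, (‖f x‖₊ : ℝ≥0∞) * ENNReal.ofReal (w x) ∂μ) ^ q := by
    intro m
    obtain ⟨u, hut, hud, hucov⟩ :=
      Vitali.exists_disjoint_subfamily_covering_enlargement_closedBall (t m) Prod.fst Prod.snd
        (m : ℝ) (fun p hp => hp.2.1) 4 (by norm_num)
    have hcount : u.Countable := by
      have hmb : ∀ p : X × ℝ,
          MeasurableSet (if p ∈ u then closedBall p.1 p.2 else (∅ : Set X)) := by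
        intro p; split_ifs
        exacts [measurableSet_closedBall, MeasurableSet.empty]
      have hdisj : Pairwise (Function.onFun Disjoint fun p : X × ℝ =>
          if p ∈ u then closedBall p.1 p.2 else (∅ : Set X)) := by
        intro p p' hne
        simp only [Function.onFun]
        split_ifs with h1 h2 h2
        · exact hud h1 h2 hne
        all_goals simp
      refine Set.Countable.mono ?_
        (Measure.countable_meas_pos_of_disjoint_iUnion (μ := μ) hmb hdisj)
      intro p hp
      simp only [mem_setOf_eq, if_pos hp]
      exact lt_of_lt_of_le (hpos p.1 p.2 (hut hp).1) (measure_mono ball_subset_closedBall)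
    haveI := hcount.to_subtype
    have hcov : Em m ⊆ ⋃ p ∈ u, ball p.1 (6 * p.2) := by
      intro x hx
      obtain ⟨p, hp, hxp⟩ := mem_iUnion₂.1 hx
      obtain ⟨b, hb, hsub⟩ := hucov p hp
      have hb2 : (0:ℝ) < b.2 := (hut hb).1
      have hx4 := hsub (ball_subset_closedBall hxp)
      exact mem_iUnion₂.2 ⟨b, hb,
        mem_ball.2 (lt_of_le_of_lt (mem_closedBall.1 hx4) (by linarith))⟩
    have hstep : ∀ p : X × ℝ, p ∈ u →
        ν (ball p.1 (6 * p.2)) ≤ (Dw:ℝ≥0∞) ^ 3 * (C1 * (ENNReal.ofReal lam ^ q)⁻¹ *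
          (∫⁻ x in ball p.1 p.2, (‖f x‖₊ : ℝ≥0∞) * ENNReal.ofReal (w x) ∂μ) ^ q) := by
      intro p hp
      have hp' := hut hp
      have h2 : (0:ℝ) < p.2 := hp'.1
      have hDstep : ∀ s : ℝ, 0 < s →
          (∫⁻ x in ball p.1 (2*s), ENNReal.ofReal (w x ^ q) ∂μ) ≤
            (Dw:ℝ≥0∞) * ∫⁻ x in ball p.1 s, ENNReal.ofReal (w x ^ q) ∂μ := by
        intro s hs
        refine (hDw0 p.1 s hs).trans (mul_le_mul_left ?_ _)
        exact_mod_cast (self_le_add_right Dw0 1)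
      calc ν (ball p.1 (6 * p.2))
          = ∫⁻ x in ball p.1 (6 * p.2), ENNReal.ofReal (w x ^ q) ∂μ :=
            withDensity_apply _ measurableSet_ball
        _ ≤ ∫⁻ x in ball p.1 (2 * (4 * p.2)), ENNReal.ofReal (w x ^ q) ∂μ :=
            lintegral_mono_set (ball_subset_ball (by linarith))
        _ ≤ (Dw:ℝ≥0∞) * ∫⁻ x in ball p.1 (4 * p.2), ENNReal.ofReal (w x ^ q) ∂μ :=
            hDstep (4 * p.2) (by linarith)
        _ = (Dw:ℝ≥0∞) * ∫⁻ x in ball p.1 (2 * (2 * p.2)), ENNReal.ofReal (w x ^ q) ∂μ := by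
            rw [show (4:ℝ) * p.2 = 2 * (2 * p.2) by ring]
        _ ≤ (Dw:ℝ≥0∞) * ((Dw:ℝ≥0∞) * ∫⁻ x in ball p.1 (2 * p.2), ENNReal.ofReal (w x ^ q) ∂μ) :=
            mul_le_mul_right (hDstep (2 * p.2) (by linarith)) _
        _ ≤ (Dw:ℝ≥0∞) * ((Dw:ℝ≥0∞) *
              ((Dw:ℝ≥0∞) * ∫⁻ x in ball p.1 p.2, ENNReal.ofReal (w x ^ q) ∂μ)) :=
            mul_le_mul_right (mul_le_mul_right (hDstep p.2 h2) _) _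
        _ ≤ (Dw:ℝ≥0∞) * ((Dw:ℝ≥0∞) * ((Dw:ℝ≥0∞) * (C1 * (ENNReal.ofReal lam ^ q)⁻¹ *
              (∫⁻ x in ball p.1 p.2, (‖f x‖₊ : ℝ≥0∞) * ENNReal.ofReal (w x) ∂μ) ^ q))) := by
            exact mul_le_mul_right (mul_le_mul_right (mul_le_mul_right
              (keyB p.1 p.2 h2 hp'.2.2.le) _) _) _
        _ = (Dw:ℝ≥0∞) ^ 3 * (C1 * (ENNReal.ofReal lam ^ q)⁻¹ *
              (∫⁻ x in ball p.1 p.2, (‖f x‖₊ : ℝ≥0∞) * ENNReal.ofReal (w x) ∂μ) ^ q) := by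
            ring
    have hdisjb : Pairwise (Function.onFun Disjoint fun p : u => ball (p : X × ℝ).1 (p : X × ℝ).2) := by
      intro p p' hne
      exact (hud p.2 p'.2 (fun h => hne (Subtype.ext h))).mono
        ball_subset_closedBall ball_subset_closedBall
    have hsum : (∑' p : u, ∫⁻ x in ball (p : X × ℝ).1 (p : X × ℝ).2,
        (‖f x‖₊ : ℝ≥0∞) * ENNReal.ofReal (w x) ∂μ) ≤
        ∫⁻ x, (‖f x‖₊ : ℝ≥0∞) * ENNReal.ofReal (w x) ∂μ := by
      have e : (∑' p : u, ∫⁻ x in ball (p : X × ℝ).1 (p : X × ℝ).2,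
          (‖f x‖₊ : ℝ≥0∞) * ENNReal.ofReal (w x) ∂μ) =
          ∫⁻ x in ⋃ p : u, ball (p : X × ℝ).1 (p : X × ℝ).2,
            (‖f x‖₊ : ℝ≥0∞) * ENNReal.ofReal (w x) ∂μ := by
        rw [Measure.restrict_iUnion hdisjb fun _ => measurableSet_ball,
          lintegral_sum_measure]
      rw [e]
      exact lintegral_mono' Measure.restrict_le_self le_rfl
    calc ν (Em m) ≤ ν (⋃ p ∈ u, ball p.1 (6 * p.2)) := measure_mono hcov
      _ ≤ ∑' p : u, ν (ball (p : X × ℝ).1 (6 * (p : X × ℝ).2)) :=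
          measure_biUnion_le ν hcount _
      _ ≤ ∑' p : u, (Dw:ℝ≥0∞) ^ 3 * (C1 * (ENNReal.ofReal lam ^ q)⁻¹ *
            (∫⁻ x in ball (p : X × ℝ).1 (p : X × ℝ).2,
              (‖f x‖₊ : ℝ≥0∞) * ENNReal.ofReal (w x) ∂μ) ^ q) :=
          ENNReal.tsum_le_tsum fun p => hstep p p.2
      _ = Ctot * (ENNReal.ofReal lam ^ q)⁻¹ *
            ∑' p : u, (∫⁻ x in ball (p : X × ℝ).1 (p : X × ℝ).2,
              (‖f x‖₊ : ℝ≥0∞) * ENNReal.ofReal (w x) ∂μ) ^ q := by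
          rw [← ENNReal.tsum_mul_left]
          exact tsum_congr fun p => by rw [hCtotdef]; ring
      _ ≤ Ctot * (ENNReal.ofReal lam ^ q)⁻¹ *
            (∑' p : u, ∫⁻ x in ball (p : X × ℝ).1 (p : X × ℝ).2,
              (‖f x‖₊ : ℝ≥0∞) * ENNReal.ofReal (w x) ∂μ) ^ q :=
          mul_le_mul_right (tsum_rpow_le_rpow_tsum _ hq1.le) _
      _ ≤ Ctot * (ENNReal.ofReal lam ^ q)⁻¹ *
            (∫⁻ x, (‖f x‖₊ : ℝ≥0∞) * ENNReal.ofReal (w x) ∂μ) ^ q :=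
          mul_le_mul_right (ENNReal.rpow_le_rpow hsum hq0.le) _
  calc (∫⁻ x in {x : X | ENNReal.ofReal lam <
        maxFX μ α (fun y => (‖f y‖₊ : ℝ≥0∞)) x}, ENNReal.ofReal (w x ^ q) ∂μ)
      ≤ ν {x : X | ENNReal.ofReal lam < maxFX μ α (fun y => (‖f y‖₊ : ℝ≥0∞)) x} :=
        withDensity_apply_le _ _
    _ ≤ ν (⋃ m, Em m) := measure_mono hEsub
    _ = ⨆ m, ν (Em m) := hEmmono.measure_iUnion
    _ ≤ Ctot * (ENNReal.ofReal lam ^ q)⁻¹ *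
          (∫⁻ x, (‖f x‖₊ : ℝ≥0∞) * ENNReal.ofReal (w x) ∂μ) ^ q := iSup_le hEmbound
end
end

section
/- Let (X,d,μ) be a space of homogeneous type with μ(B) ≥ c r(B)^n for all balls B. Let 0<α<n, 1 < p < n/α and 1/q = 1/p − α/n. Then there is a constant C such that for every f ∈ L^p(μ) and every x ∈ X, T_α(|f|)(x) ≤ C ‖f‖_{L^p(μ)}^{pα/n} (Mf(x))^{p/q}, where M is the Hardy–Littlewood maximal operator on (X,μ). -/
open MeasureTheory Metric Set ENNReal NNReal

noncomputable section

variable {X : Type*} [MetricSpace X] [MeasurableSpace X] [BorelSpace X]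

set_option linter.unusedSectionVars false

lemma avg_le_maxFX (μ : Measure X) (g : X → ℝ≥0∞) {x c : X} {r : ℝ}
    (hr : 0 < r) (hx : x ∈ ball c r) :
    avgBX μ c r g ≤ maxFX μ 0 g x := by
  have h : ENNReal.ofReal (r ^ (0:ℝ)) * avgBX μ c r g = avgBX μ c r g := by
    simp
  calc avgBX μ c r g = ENNReal.ofReal (r ^ (0:ℝ)) * avgBX μ c r g := h.symm
    _ ≤ maxFX μ 0 g x :=
      le_iSup_of_le c <| le_iSup_of_le r <| le_iSup_of_le hr <| le_iSup_of_le hx le_rfl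

lemma holder_ball (μ : Measure X) {g : X → ℝ≥0∞} (hg : Measurable g)
    {p p' : ℝ} (hpq : Real.HolderConjugate p p') (s : Set X) :
    ∫⁻ y in s, g y ∂μ ≤ (∫⁻ y, g y ^ p ∂μ) ^ (1/p) * (μ s) ^ (1/p') := by
  have h := ENNReal.lintegral_mul_le_Lp_mul_Lq (μ.restrict s) hpq
    hg.aemeasurable (aemeasurable_const (b := (1:ℝ≥0∞)))
  simp only [Pi.mul_apply, mul_one, ENNReal.one_rpow, lintegral_one,
    Measure.restrict_apply_univ] at h
  refine h.trans (mul_le_mul_left ?_ _)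
  have hp0 : (0:ℝ) < p := hpq.pos
  exact ENNReal.rpow_le_rpow (setLIntegral_le_lintegral s _) (by positivity)

lemma annuli_near {δ d : ℝ} (hδ : 0 < δ) (hd0 : 0 < d) (hdδ : d < δ) :
    ∃ j : ℕ, δ / 2 ^ (j+1) ≤ d ∧ d < δ / 2 ^ j := by
  have hex : ∃ j : ℕ, δ / 2 ^ (j+1) ≤ d := by
    obtain ⟨j, hj⟩ := pow_unbounded_of_one_lt (δ / d) (by norm_num : (1:ℝ) < 2)
    refine ⟨j, ?_⟩
    rw [div_le_iff₀ (by positivity)]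
    rw [div_lt_iff₀ hd0] at hj
    have h2 : (2:ℝ) ^ j * d ≤ d * 2 ^ (j+1) := by
      rw [mul_comm]
      have : (2:ℝ) ^ j ≤ 2 ^ (j+1) := by
        apply pow_le_pow_right₀ (by norm_num) (by omega)
      nlinarith
    linarith
  classical
  refine ⟨Nat.find hex, Nat.find_spec hex, ?_⟩
  rcases Nat.eq_zero_or_pos (Nat.find hex) with h0 | h0
  · rw [h0]; simpa using hdδ
  · obtain ⟨k, hk⟩ := Nat.exists_eq_succ_of_ne_zero h0.ne'
    have := Nat.find_min hex (m := k) (by omega)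
    rw [hk]
    exact lt_of_not_ge (by simpa using this)

lemma annuli_far {δ d : ℝ} (hδ : 0 < δ) (hdδ : δ ≤ d) :
    ∃ j : ℕ, δ * 2 ^ j ≤ d ∧ d < δ * 2 ^ (j+1) := by
  have hex : ∃ j : ℕ, d < δ * 2 ^ (j+1) := by
    obtain ⟨j, hj⟩ := pow_unbounded_of_one_lt (d / δ) (by norm_num : (1:ℝ) < 2)
    refine ⟨j, ?_⟩
    rw [div_lt_iff₀ hδ] at hj
    have h2 : (2:ℝ) ^ j * δ ≤ δ * 2 ^ (j+1) := by
      rw [mul_comm]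
      have : (2:ℝ) ^ j ≤ 2 ^ (j+1) := by
        apply pow_le_pow_right₀ (by norm_num) (by omega)
      nlinarith
    linarith
  classical
  refine ⟨Nat.find hex, ?_, Nat.find_spec hex⟩
  rcases Nat.eq_zero_or_pos (Nat.find hex) with h0 | h0
  · rw [h0]; simpa using hdδ
  · obtain ⟨k, hk⟩ := Nat.exists_eq_succ_of_ne_zero h0.ne'
    have := Nat.find_min hex (m := k) (by omega)
    rw [hk]
    exact le_of_not_gt (by simpa using this)

lemma pow_rpow_comm {x : ℝ} (hx : 0 ≤ x) (j : ℕ) (a : ℝ) :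
    (x ^ j) ^ a = (x ^ a) ^ j := by
  rw [← Real.rpow_natCast x j, ← Real.rpow_mul hx, mul_comm, Real.rpow_mul hx,
    Real.rpow_natCast]

set_option linter.unusedSectionVars false

lemma near_bound (μ : Measure X)
    (hfin : ∀ (c : X) (r : ℝ), 0 < r → μ (ball c r) < ∞)
    (hpos : ∀ (c : X) (r : ℝ), 0 < r → 0 < μ (ball c r))
    {D : ℝ≥0} (hD : ∀ (c : X) (r : ℝ), 0 < r → μ (ball c (2*r)) ≤ D * μ (ball c r))
    {α : ℝ} (hα : 0 < α)
    (g : X → ℝ≥0∞) (hg : Measurable g) (x : X) {δ : ℝ} (hδ : 0 < δ) :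
    ∫⁻ y in ball x δ, ENNReal.ofReal (dist x y ^ α) / μ (ball x (dist x y)) * g y ∂μ ≤
      ((D : ℝ≥0∞) * (1 - ENNReal.ofReal ((2:ℝ)⁻¹ ^ α))⁻¹) *
        ENNReal.ofReal (δ ^ α) * maxFX μ 0 g x := by
  set K : X → ℝ≥0∞ := fun y => ENNReal.ofReal (dist x y ^ α) / μ (ball x (dist x y)) * g y with hK
  set M := maxFX μ 0 g x with hM
  set A : ℕ → Set X := fun j => ball x (δ / 2 ^ j) \ ball x (δ / 2 ^ (j+1)) with hA
  -- covering
  have hcov : ball x δ ⊆ {x} ∪ ⋃ j, A j := by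
    intro y hy
    rcases eq_or_ne y x with h | h
    · exact Or.inl h
    · have hd0 : 0 < dist y x := dist_pos.2 h
      have hdδ : dist y x < δ := mem_ball.1 hy
      obtain ⟨j, hj1, hj2⟩ := annuli_near hδ hd0 hdδ
      exact Or.inr (mem_iUnion.2 ⟨j, mem_ball.2 hj2, fun hc => absurd (mem_ball.1 hc) (not_lt.2 hj1)⟩)
  -- integral over {x} is zero
  have hsing : ∫⁻ y in {x}, K y ∂μ = 0 := by
    refine le_antisymm ?_ zero_le
    have : ∀ y ∈ ({x} : Set X), K y ≤ 0 := by
      intro y hy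
      rcases hy with rfl
      simp [hK, Real.zero_rpow hα.ne']
    calc ∫⁻ y in {x}, K y ∂μ ≤ ∫⁻ _ in ({x} : Set X), 0 ∂μ :=
          setLIntegral_mono' (measurableSet_singleton x) this
      _ = 0 := by simp
  -- per-annulus bound
  have hann : ∀ j : ℕ, ∫⁻ y in A j, K y ∂μ ≤
      (ENNReal.ofReal (δ ^ α) * (ENNReal.ofReal ((2:ℝ)⁻¹ ^ α)) ^ j) * ((D : ℝ≥0∞) * M) := by
    intro j
    set b : ℝ := δ / 2 ^ j with hb
    set a : ℝ := δ / 2 ^ (j+1) with ha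
    have hb0 : 0 < b := by positivity
    have ha0 : 0 < a := by positivity
    have hba : b = 2 * a := by rw [hb, ha]; ring
    set κ : ℝ≥0∞ := ENNReal.ofReal (b ^ α) / μ (ball x a) with hκ
    have hAmeas : MeasurableSet (A j) :=
      measurableSet_ball.diff measurableSet_ball
    have hKbd : ∀ y ∈ A j, K y ≤ κ * g y := by
      intro y hy
      have h1 : dist x y < b := by rw [dist_comm]; exact mem_ball.1 hy.1
      have h2 : a ≤ dist x y := by
        rw [dist_comm]; exact not_lt.1 (fun hc => hy.2 (mem_ball.2 hc))
      refine mul_le_mul_left ?_ _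
      refine ENNReal.div_le_div ?_ ?_
      · exact ENNReal.ofReal_le_ofReal
          (Real.rpow_le_rpow dist_nonneg h1.le hα.le)
      · exact measure_mono (ball_subset_ball h2)
    have step1 : ∫⁻ y in A j, K y ∂μ ≤ κ * ∫⁻ y in A j, g y ∂μ := by
      calc ∫⁻ y in A j, K y ∂μ ≤ ∫⁻ y in A j, κ * g y ∂μ := setLIntegral_mono' hAmeas hKbd
        _ = κ * ∫⁻ y in A j, g y ∂μ := lintegral_const_mul κ hg
    have hAsub : A j ⊆ ball x b := diff_subset
    have step2 : ∫⁻ y in A j, g y ∂μ ≤ μ (ball x b) * avgBX μ x b g := by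
      rw [avgBX, ← mul_assoc, ENNReal.mul_inv_cancel (hpos x b hb0).ne' (hfin x b hb0).ne,
        one_mul]
      exact lintegral_mono_set hAsub
    have havg : avgBX μ x b g ≤ M := avg_le_maxFX μ g hb0 (mem_ball_self hb0)
    have hdouble : μ (ball x b) ≤ D * μ (ball x a) := by
      rw [hba]; exact hD x a ha0
    have hbα : ENNReal.ofReal (b ^ α) =
        ENNReal.ofReal (δ ^ α) * (ENNReal.ofReal ((2:ℝ)⁻¹ ^ α)) ^ j := by
      have hreal : b ^ α = δ ^ α * ((2:ℝ)⁻¹ ^ α) ^ j := by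
        have : b = δ * (2:ℝ)⁻¹ ^ j := by rw [hb, inv_pow, div_eq_mul_inv]
        rw [this, Real.mul_rpow hδ.le (by positivity), pow_rpow_comm (by norm_num)]
      rw [hreal, ENNReal.ofReal_mul (by positivity), ENNReal.ofReal_pow (by positivity)]
    calc ∫⁻ y in A j, K y ∂μ ≤ κ * ∫⁻ y in A j, g y ∂μ := step1
      _ ≤ κ * (μ (ball x b) * avgBX μ x b g) := by
          exact mul_le_mul_right step2 κ
      _ = ENNReal.ofReal (b ^ α) * ((μ (ball x a))⁻¹ * μ (ball x b)) * avgBX μ x b g := by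
          rw [hκ, ENNReal.div_eq_inv_mul]; ring
      _ ≤ ENNReal.ofReal (b ^ α) * (D : ℝ≥0∞) * M := by
          refine mul_le_mul' (mul_le_mul_right ?_ _) havg
          calc (μ (ball x a))⁻¹ * μ (ball x b) ≤ (μ (ball x a))⁻¹ * ((D:ℝ≥0∞) * μ (ball x a)) :=
                mul_le_mul_right hdouble _
            _ = (D:ℝ≥0∞) * ((μ (ball x a))⁻¹ * μ (ball x a)) := by ring
            _ = D := by
                rw [ENNReal.inv_mul_cancel (hpos x a ha0).ne' (hfin x a ha0).ne, mul_one]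
      _ = (ENNReal.ofReal (δ ^ α) * (ENNReal.ofReal ((2:ℝ)⁻¹ ^ α)) ^ j) * ((D : ℝ≥0∞) * M) := by
          rw [hbα]; ring
  -- combine
  calc ∫⁻ y in ball x δ, K y ∂μ ≤ ∫⁻ y in {x} ∪ ⋃ j, A j, K y ∂μ := lintegral_mono_set hcov
    _ ≤ ∫⁻ y in {x}, K y ∂μ + ∫⁻ y in ⋃ j, A j, K y ∂μ := lintegral_union_le _ _ _
    _ = ∫⁻ y in ⋃ j, A j, K y ∂μ := by rw [hsing, zero_add]
    _ ≤ ∑' j, ∫⁻ y in A j, K y ∂μ := lintegral_iUnion_le _ _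
    _ ≤ ∑' j, (ENNReal.ofReal (δ ^ α) * (ENNReal.ofReal ((2:ℝ)⁻¹ ^ α)) ^ j) * ((D : ℝ≥0∞) * M) :=
        ENNReal.tsum_le_tsum hann
    _ = (ENNReal.ofReal (δ ^ α) * (1 - ENNReal.ofReal ((2:ℝ)⁻¹ ^ α))⁻¹) * ((D : ℝ≥0∞) * M) := by
        simp only [mul_assoc]
        rw [ENNReal.tsum_mul_left, ENNReal.tsum_mul_right, ENNReal.tsum_geometric]
    _ = ((D : ℝ≥0∞) * (1 - ENNReal.ofReal ((2:ℝ)⁻¹ ^ α))⁻¹) * ENNReal.ofReal (δ ^ α) * M := by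
        ring

lemma far_bound (μ : Measure X)
    (hfin : ∀ (c : X) (r : ℝ), 0 < r → μ (ball c r) < ∞)
    (hpos : ∀ (c : X) (r : ℝ), 0 < r → 0 < μ (ball c r))
    {D : ℝ≥0} (hD : ∀ (c : X) (r : ℝ), 0 < r → μ (ball c (2*r)) ≤ D * μ (ball c r))
    {cl nd : ℝ} (hcl : 0 < cl)
    (hgrowth : ∀ (z : X) (r : ℝ), 0 < r → ENNReal.ofReal (cl * r ^ nd) ≤ μ (ball z r))
    {α p p' : ℝ} (hα : 0 < α) (hpq : Real.HolderConjugate p p')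
    (g : X → ℝ≥0∞) (hg : Measurable g) (x : X) {δ : ℝ} (hδ : 0 < δ) :
    ∫⁻ y in (ball x δ)ᶜ, ENNReal.ofReal (dist x y ^ α) / μ (ball x (dist x y)) * g y ∂μ ≤
      (ENNReal.ofReal ((2:ℝ) ^ α) * (D:ℝ≥0∞) ^ (1/p') * (ENNReal.ofReal cl) ^ (-(1/p))
        * (1 - ENNReal.ofReal ((2:ℝ) ^ (α - nd/p)))⁻¹)
      * ENNReal.ofReal (δ ^ (α - nd/p)) * (∫⁻ y, g y ^ p ∂μ) ^ (1/p) := by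
  have hp0 : (0:ℝ) < p := hpq.pos
  have hp'0 : (0:ℝ) < p' := hpq.symm.pos
  set s : ℝ := α - nd/p with hs
  set K : X → ℝ≥0∞ := fun y => ENNReal.ofReal (dist x y ^ α) / μ (ball x (dist x y)) * g y with hK
  set N : ℝ≥0∞ := (∫⁻ y, g y ^ p ∂μ) ^ (1/p) with hN
  set A : ℕ → Set X := fun j => ball x (δ * 2 ^ (j+1)) \ ball x (δ * 2 ^ j) with hA
  have hcov : (ball x δ)ᶜ ⊆ ⋃ j, A j := by
    intro y hy
    have hdδ : δ ≤ dist y x := not_lt.1 (fun hc => hy (mem_ball.2 hc))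
    obtain ⟨j, hj1, hj2⟩ := annuli_far hδ hdδ
    exact mem_iUnion.2 ⟨j, mem_ball.2 hj2, fun hc => absurd (mem_ball.1 hc) (not_lt.2 hj1)⟩
  have hann : ∀ j : ℕ, ∫⁻ y in A j, K y ∂μ ≤
      (ENNReal.ofReal ((2:ℝ)^α) * (D:ℝ≥0∞)^(1/p') * (ENNReal.ofReal cl)^(-(1/p))
        * ENNReal.ofReal (δ^s) * (ENNReal.ofReal ((2:ℝ)^s))^j) * N := by
    intro j
    set a : ℝ := δ * 2 ^ j with ha
    set b : ℝ := δ * 2 ^ (j+1) with hb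
    have ha0 : 0 < a := by positivity
    have hb0 : 0 < b := by positivity
    have hba : b = 2 * a := by rw [hb, ha]; ring
    set κ : ℝ≥0∞ := ENNReal.ofReal (b ^ α) / μ (ball x a) with hκ
    set ma : ℝ≥0∞ := μ (ball x a) with hma
    have hma0 : ma ≠ 0 := (hpos x a ha0).ne'
    have hmat : ma ≠ ∞ := (hfin x a ha0).ne
    have hAmeas : MeasurableSet (A j) := measurableSet_ball.diff measurableSet_ball
    have hKbd : ∀ y ∈ A j, K y ≤ κ * g y := by
      intro y hy
      have h1 : dist x y < b := by rw [dist_comm]; exact mem_ball.1 hy.1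
      have h2 : a ≤ dist x y := by
        rw [dist_comm]; exact not_lt.1 (fun hc => hy.2 (mem_ball.2 hc))
      refine mul_le_mul_left ?_ _
      refine ENNReal.div_le_div ?_ ?_
      · exact ENNReal.ofReal_le_ofReal (Real.rpow_le_rpow dist_nonneg h1.le hα.le)
      · exact measure_mono (ball_subset_ball h2)
    have step1 : ∫⁻ y in A j, K y ∂μ ≤ κ * ∫⁻ y in A j, g y ∂μ := by
      calc ∫⁻ y in A j, K y ∂μ ≤ ∫⁻ y in A j, κ * g y ∂μ := setLIntegral_mono' hAmeas hKbd
        _ = κ * ∫⁻ y in A j, g y ∂μ := lintegral_const_mul κ hg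
    have step2 : ∫⁻ y in A j, g y ∂μ ≤ N * (μ (ball x b)) ^ (1/p') :=
      le_trans (lintegral_mono_set diff_subset) (holder_ball μ hg hpq _)
    have hdouble : μ (ball x b) ≤ (D:ℝ≥0∞) * ma := by rw [hba]; exact hD x a ha0
    have step3 : (μ (ball x b)) ^ (1/p') ≤ (D:ℝ≥0∞)^(1/p') * ma^(1/p') := by
      have h := ENNReal.rpow_le_rpow hdouble (by positivity : (0:ℝ) ≤ 1/p')
      rwa [ENNReal.mul_rpow_of_ne_top coe_ne_top hmat] at h
    have hinvpow : ma⁻¹ * ma^(1/p') = ma^(-(1/p)) := by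
      have hexp : (-1 : ℝ) + 1/p' = -(1/p) := by
        have := hpq.inv_add_inv_eq_one
        have e1 : p⁻¹ = 1/p := (one_div p).symm
        have e2 : p'⁻¹ = 1/p' := (one_div p').symm
        linarith [hpq.inv_add_inv_eq_one]
      rw [← ENNReal.rpow_neg_one, ← ENNReal.rpow_add _ _ hma0 hmat, hexp]
    have step5 : ma^(-(1/p)) ≤ (ENNReal.ofReal cl)^(-(1/p)) * ENNReal.ofReal (a^(-(nd/p))) := by
      have h1 : ma^(-(1/p)) ≤ (ENNReal.ofReal (cl * a ^ nd))^(-(1/p)) := by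
        rw [ENNReal.rpow_neg, ENNReal.rpow_neg]
        exact ENNReal.inv_le_inv.2 (ENNReal.rpow_le_rpow (hgrowth x a ha0) (by positivity))
      refine h1.trans_eq ?_
      rw [ENNReal.ofReal_mul hcl.le,
        ENNReal.mul_rpow_of_ne_top ENNReal.ofReal_ne_top ENNReal.ofReal_ne_top]
      congr 1
      rw [ENNReal.ofReal_rpow_of_pos (by positivity : (0:ℝ) < a ^ nd),
        ← Real.rpow_mul ha0.le, show nd * -(1/p) = -(nd/p) by ring]
    have key : b ^ α * a ^ (-(nd/p)) = 2^α * (δ^s * ((2:ℝ)^s)^j) := by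
      have h1 : b ^ α = 2^α * a^α := by rw [hba, Real.mul_rpow (by norm_num) ha0.le]
      have h2 : a ^ α * a ^ (-(nd/p)) = a ^ s := by
        rw [← Real.rpow_add ha0]
        congr 1
      have h3 : a ^ s = δ^s * ((2:ℝ)^s)^j := by
        rw [ha, Real.mul_rpow hδ.le (by positivity), pow_rpow_comm (by norm_num)]
      rw [h1, mul_assoc, h2, h3]
    calc ∫⁻ y in A j, K y ∂μ ≤ κ * ∫⁻ y in A j, g y ∂μ := step1
      _ ≤ κ * (N * (μ (ball x b)) ^ (1/p')) := mul_le_mul_right step2 κ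
      _ ≤ κ * (N * ((D:ℝ≥0∞)^(1/p') * ma^(1/p'))) :=
          mul_le_mul_right (mul_le_mul_right step3 N) κ
      _ = ENNReal.ofReal (b^α) * (D:ℝ≥0∞)^(1/p') * (ma⁻¹ * ma^(1/p')) * N := by
          rw [hκ, ENNReal.div_eq_inv_mul]; ring
      _ = ENNReal.ofReal (b^α) * (D:ℝ≥0∞)^(1/p') * ma^(-(1/p)) * N := by rw [hinvpow]
      _ ≤ ENNReal.ofReal (b^α) * (D:ℝ≥0∞)^(1/p') *
            ((ENNReal.ofReal cl)^(-(1/p)) * ENNReal.ofReal (a^(-(nd/p)))) * N := by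
          exact mul_le_mul_left (mul_le_mul_right step5 _) N
      _ = (ENNReal.ofReal ((2:ℝ)^α) * (D:ℝ≥0∞)^(1/p') * (ENNReal.ofReal cl)^(-(1/p))
            * ENNReal.ofReal (δ^s) * (ENNReal.ofReal ((2:ℝ)^s))^j) * N := by
          have e1 : ENNReal.ofReal (b^α) * ENNReal.ofReal (a^(-(nd/p))) =
              ENNReal.ofReal ((2:ℝ)^α) *
                (ENNReal.ofReal (δ^s) * (ENNReal.ofReal ((2:ℝ)^s))^j) := by
            rw [← ENNReal.ofReal_mul (show (0:ℝ) ≤ b^α by positivity), key,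
              ENNReal.ofReal_mul (show (0:ℝ) ≤ (2:ℝ)^α by positivity),
              ENNReal.ofReal_mul (show (0:ℝ) ≤ δ^s by positivity),
              ENNReal.ofReal_pow (show (0:ℝ) ≤ (2:ℝ)^s by positivity)]
          calc ENNReal.ofReal (b^α) * (D:ℝ≥0∞)^(1/p') *
              ((ENNReal.ofReal cl)^(-(1/p)) * ENNReal.ofReal (a^(-(nd/p)))) * N
              = (ENNReal.ofReal (b^α) * ENNReal.ofReal (a^(-(nd/p)))) *
                ((D:ℝ≥0∞)^(1/p') * (ENNReal.ofReal cl)^(-(1/p))) * N := by ring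
            _ = _ := by rw [e1]; ring
  calc ∫⁻ y in (ball x δ)ᶜ, K y ∂μ ≤ ∫⁻ y in ⋃ j, A j, K y ∂μ := lintegral_mono_set hcov
    _ ≤ ∑' j, ∫⁻ y in A j, K y ∂μ := lintegral_iUnion_le _ _
    _ ≤ ∑' j, (ENNReal.ofReal ((2:ℝ)^α) * (D:ℝ≥0∞)^(1/p') * (ENNReal.ofReal cl)^(-(1/p))
        * ENNReal.ofReal (δ^s) * (ENNReal.ofReal ((2:ℝ)^s))^j) * N := ENNReal.tsum_le_tsum hann
    _ = (ENNReal.ofReal ((2:ℝ) ^ α) * (D:ℝ≥0∞) ^ (1/p') * (ENNReal.ofReal cl) ^ (-(1/p))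
        * (1 - ENNReal.ofReal ((2:ℝ) ^ s))⁻¹) * ENNReal.ofReal (δ ^ s) * N := by
        simp only [mul_assoc]
        rw [ENNReal.tsum_mul_left, ENNReal.tsum_mul_left, ENNReal.tsum_mul_left,
          ENNReal.tsum_mul_left, ENNReal.tsum_mul_right, ENNReal.tsum_geometric]
        ring


theorem statement13_aux
    (μ : Measure X)
    (hμ : (∀ (c : X) (r : ℝ), 0 < r → μ (ball c r) < ∞) ∧
      (∀ (c : X) (r : ℝ), 0 < r → 0 < μ (ball c r)) ∧
      ∃ D : ℝ≥0, ∀ (c : X) (r : ℝ), 0 < r → μ (ball c (2 * r)) ≤ D * μ (ball c r))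
    (cl nd : ℝ) (hcl : 0 < cl) (hnd : 0 < nd)
    (hgrowth : ∀ (z : X) (r : ℝ), 0 < r → ENNReal.ofReal (cl * r ^ nd) ≤ μ (ball z r))
    (α p q : ℝ) (hα0 : 0 < α) (hαn : α < nd)
    (hp1 : 1 < p) (hpn : p < nd / α) (hq : 1 / q = 1 / p - α / nd) :
    ∃ C : ℝ≥0, ∀ f : X → ℝ, Measurable f →
      (∫⁻ y, (‖f y‖₊ : ℝ≥0∞) ^ p ∂μ) < ∞ →
      ∀ x : X,
        TalphaE μ α (fun y => (‖f y‖₊ : ℝ≥0∞)) x ≤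
          C * ((∫⁻ y, (‖f y‖₊ : ℝ≥0∞) ^ p ∂μ) ^ (1 / p)) ^ (p * α / nd) *
            (maxFX μ 0 (fun y => (‖f y‖₊ : ℝ≥0∞)) x) ^ (p / q) := by
  obtain ⟨hfin, hpos, D, hD⟩ := hμ
  have hp0 : (0:ℝ) < p := lt_trans one_pos hp1
  have hpαn : p * α < nd := (lt_div_iff₀ hα0).1 hpn
  have hαnp : α - nd / p < 0 := by
    rw [sub_neg]
    rw [lt_div_iff₀ hp0]
    linarith [hpαn]
  set θ : ℝ := p * α / nd with hθ
  have hθpos : 0 < θ := by positivity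
  have hθlt : θ < 1 := by rw [hθ, div_lt_one hnd]; exact hpαn
  have hq' : p / q = 1 - θ := by
    rw [div_eq_mul_one_div, hq, hθ]
    field_simp
  set p' : ℝ := p.conjExponent with hp'
  have hpq : Real.HolderConjugate p p' := Real.HolderConjugate.conjExponent hp1
  have hp'0 : (0:ℝ) < p' := hpq.symm.pos
  set C1 : ℝ≥0∞ := (D:ℝ≥0∞) * (1 - ENNReal.ofReal ((2:ℝ)⁻¹ ^ α))⁻¹ with hC1
  set C2 : ℝ≥0∞ := ENNReal.ofReal ((2:ℝ)^α) * (D:ℝ≥0∞)^(1/p') * (ENNReal.ofReal cl)^(-(1/p))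
      * (1 - ENNReal.ofReal ((2:ℝ)^(α - nd/p)))⁻¹ with hC2
  have hinv1 : (1 - ENNReal.ofReal ((2:ℝ)⁻¹ ^ α))⁻¹ ≠ ∞ := by
    rw [Ne, ENNReal.inv_eq_top, tsub_eq_zero_iff_le]
    exact not_le.2 (ENNReal.ofReal_lt_one.2
      (Real.rpow_lt_one (by norm_num) (by norm_num) hα0))
  have hinv2 : (1 - ENNReal.ofReal ((2:ℝ)^(α - nd/p)))⁻¹ ≠ ∞ := by
    rw [Ne, ENNReal.inv_eq_top, tsub_eq_zero_iff_le]
    exact not_le.2 (ENNReal.ofReal_lt_one.2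
      (Real.rpow_lt_one_of_one_lt_of_neg (by norm_num) hαnp))
  have hC1top : C1 ≠ ∞ := ENNReal.mul_ne_top coe_ne_top hinv1
  have hC2top : C2 ≠ ∞ := by
    refine ENNReal.mul_ne_top (ENNReal.mul_ne_top (ENNReal.mul_ne_top
      ENNReal.ofReal_ne_top (ENNReal.rpow_ne_top_of_nonneg (by positivity) coe_ne_top)) ?_) hinv2
    rw [ENNReal.rpow_neg, Ne, ENNReal.inv_eq_top]
    exact (ENNReal.rpow_pos (ENNReal.ofReal_pos.2 hcl) ENNReal.ofReal_ne_top).ne'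
  set Ctot : ℝ≥0∞ := C1 + C2 with hCtot
  have hCtotTop : Ctot ≠ ∞ := by
    rw [hCtot]; exact ENNReal.add_ne_top.2 ⟨hC1top, hC2top⟩
  refine ⟨Ctot.toNNReal + 1, ?_⟩
  have hCle : Ctot ≤ ((Ctot.toNNReal + 1 : ℝ≥0) : ℝ≥0∞) := by
    push_cast
    rw [ENNReal.coe_toNNReal hCtotTop]
    exact le_add_of_nonneg_right zero_le
  have hCne0 : ((Ctot.toNNReal + 1 : ℝ≥0) : ℝ≥0∞) ≠ 0 := by
    simp
  intro f hf hfLp x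
  set g : X → ℝ≥0∞ := fun y => (‖f y‖₊ : ℝ≥0∞) with hgdef
  have hg : Measurable g := hf.nnnorm.coe_nnreal_ennreal
  set A : ℝ≥0∞ := ∫⁻ y, g y ^ p ∂μ with hAdef
  set N : ℝ≥0∞ := A ^ (1/p) with hNdef
  set M : ℝ≥0∞ := maxFX μ 0 g x with hMdef
  have hAtop : A ≠ ∞ := hfLp.ne
  -- trivial case: g vanishes a.e.
  by_cases hA0 : A = 0
  · have hgz : g =ᵐ[μ] 0 := by
      have h := (lintegral_eq_zero_iff (hg.pow_const p)).1 hA0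
      filter_upwards [h] with y hy
      simp only [Pi.zero_apply] at hy ⊢
      rcases ENNReal.rpow_eq_zero_iff.1 hy with ⟨h1, _⟩ | ⟨_, h2⟩
      · exact h1
      · linarith
    have hT : TalphaE μ α g x = 0 := by
      rw [TalphaE]
      rw [← lintegral_zero (μ := μ)]
      apply lintegral_congr_ae
      filter_upwards [hgz] with y hy
      rw [hy, Pi.zero_apply, mul_zero]
    rw [hT]
    exact zero_le
  · have hN0 : N ≠ 0 := by
      rw [hNdef, Ne, ENNReal.rpow_eq_zero_iff]
      push_neg
      constructor
      · intro h; exact absurd h hA0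
      · intro h; exact absurd h hAtop
    have hNtop : N ≠ ∞ := by
      rw [hNdef]
      exact ENNReal.rpow_ne_top_of_nonneg (by positivity) hAtop
    by_cases hMtop : M = ∞
    · -- RHS is infinite
      have : (↑(Ctot.toNNReal + 1) : ℝ≥0∞) * N ^ θ * M ^ (p/q) = ∞ := by
        rw [hMtop, hq', ENNReal.top_rpow_of_pos (by linarith), ENNReal.mul_top]
        exact mul_ne_zero hCne0 (by
          rw [Ne, ENNReal.rpow_eq_zero_iff]
          push_neg
          exact ⟨fun h => absurd h hN0, fun h => absurd h hNtop⟩)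
      rw [this]
      exact le_top
    · have hM0 : M ≠ 0 := by
        intro hM0
        apply hA0
        have hball : ∀ k : ℕ, ∫⁻ y in ball x ((k:ℝ)+1), g y ∂μ = 0 := by
          intro k
          have hk0 : (0:ℝ) < (k:ℝ)+1 := by positivity
          have havg := avg_le_maxFX (x := x) (c := x) μ g hk0 (mem_ball_self hk0)
          rw [← hMdef, hM0, le_zero_iff, avgBX, mul_eq_zero] at havg
          rcases havg with h | h
          · exact absurd (ENNReal.inv_eq_zero.1 h) (hfin x _ hk0).ne
          · exact h
        have hgint : ∫⁻ y, g y ∂μ = 0 := by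
          refine le_antisymm ?_ zero_le
          have hcov : (Set.univ : Set X) ⊆ ⋃ k : ℕ, ball x ((k:ℝ)+1) := by
            intro y _
            obtain ⟨k, hk⟩ := exists_nat_gt (dist y x)
            exact Set.mem_iUnion.2 ⟨k, mem_ball.2 (by linarith)⟩
          calc ∫⁻ y, g y ∂μ = ∫⁻ y in Set.univ, g y ∂μ := by rw [Measure.restrict_univ]
            _ ≤ ∫⁻ y in ⋃ k : ℕ, ball x ((k:ℝ)+1), g y ∂μ := lintegral_mono_set hcov
            _ ≤ ∑' k : ℕ, ∫⁻ y in ball x ((k:ℝ)+1), g y ∂μ := lintegral_iUnion_le _ _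
            _ = 0 := by simp [hball]
        have hgz := (lintegral_eq_zero_iff hg).1 hgint
        rw [hAdef, ← lintegral_zero (μ := μ)]
        apply lintegral_congr_ae
        filter_upwards [hgz] with y hy
        simp only [Pi.zero_apply] at hy ⊢
        rw [hy, ENNReal.zero_rpow_of_pos hp0]
      -- main case
      set ν : ℝ := N.toReal with hν
      set m : ℝ := M.toReal with hm
      have hν0 : 0 < ν := ENNReal.toReal_pos hN0 hNtop
      have hm0 : 0 < m := ENNReal.toReal_pos hM0 hMtop
      have hNr : N = ENNReal.ofReal ν := (ENNReal.ofReal_toReal hNtop).symm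
      have hMr : M = ENNReal.ofReal m := (ENNReal.ofReal_toReal hMtop).symm
      set δ : ℝ := (ν/m) ^ (p/nd) with hδdef
      have hδ0 : 0 < δ := by positivity
      have hδs : ∀ t : ℝ, δ ^ t = ν^(p/nd*t) * m^(-(p/nd*t)) := by
        intro t
        rw [hδdef, ← Real.rpow_mul (by positivity), Real.div_rpow hν0.le hm0.le,
          Real.rpow_neg hm0.le, div_eq_mul_inv]
      have hsplit : TalphaE μ α g x =
          (∫⁻ y in ball x δ, ENNReal.ofReal (dist x y ^ α) / μ (ball x (dist x y)) * g y ∂μ) +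
          (∫⁻ y in (ball x δ)ᶜ, ENNReal.ofReal (dist x y ^ α) / μ (ball x (dist x y)) * g y ∂μ) := by
        rw [TalphaE, ← lintegral_add_compl _ (measurableSet_ball (x := x) (ε := δ))]
      have hnear := near_bound μ hfin hpos hD hα0 g hg x hδ0
      have hfar := far_bound μ hfin hpos hD hcl hgrowth hα0 hpq g hg x hδ0
      set R : ℝ≥0∞ := ENNReal.ofReal (ν^θ * m^(1-θ)) with hR
      have e1 : ENNReal.ofReal (δ^α) * M = R := by
        rw [hMr, ← ENNReal.ofReal_mul (by positivity), hR]
        congr 1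
        rw [hδs α, show p/nd*α = θ by rw [hθ]; ring,
          show m ^ (1-θ) = m * m^(-θ) by
            rw [sub_eq_add_neg, Real.rpow_add hm0, Real.rpow_one]]
        ring
      have e2 : ENNReal.ofReal (δ^(α - nd/p)) * N = R := by
        rw [hNr, ← ENNReal.ofReal_mul (by positivity), hR]
        congr 1
        have hh : ν ^ (θ-1) * ν = ν ^ θ := by
          nth_rewrite 2 [← Real.rpow_one ν]
          rw [← Real.rpow_add hν0]
          norm_num
        rw [hδs (α - nd/p), show p/nd*(α - nd/p) = θ - 1 by
            rw [hθ]; field_simp, neg_sub]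
        rw [← hh]
        ring
      calc TalphaE μ α g x ≤ C1 * ENNReal.ofReal (δ^α) * M
            + C2 * ENNReal.ofReal (δ^(α - nd/p)) * N := by
            rw [hsplit]
            exact add_le_add hnear hfar
        _ = Ctot * R := by
            rw [mul_assoc C1, mul_assoc C2, e1, e2, hCtot, add_mul]
        _ = Ctot * (N ^ θ * M ^ (1-θ)) := by
            rw [hR, hNr, hMr, ENNReal.ofReal_rpow_of_pos hν0,
              ENNReal.ofReal_rpow_of_pos hm0,
              ENNReal.ofReal_mul (by positivity)]
        _ ≤ ↑(Ctot.toNNReal + 1) * (N ^ θ * M ^ (1-θ)) := mul_le_mul_left hCle _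
        _ = ↑(Ctot.toNNReal + 1) * N ^ θ * M ^ (p/q) := by
            rw [hq', mul_assoc]

theorem statement13
    (μ : Measure X) (hμ : IsSHT μ)
    (cl nd : ℝ) (hcl : 0 < cl) (hnd : 0 < nd) (hgrowth : GrowthGE μ cl nd)
    (α p q : ℝ) (hα0 : 0 < α) (hαn : α < nd)
    (hp1 : 1 < p) (hpn : p < nd / α) (hq : 1 / q = 1 / p - α / nd) :
    ∃ C : ℝ≥0, ∀ f : X → ℝ, Measurable f →
      (∫⁻ y, (‖f y‖₊ : ℝ≥0∞) ^ p ∂μ) < ∞ →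
      ∀ x : X,
        TalphaE μ α (fun y => (‖f y‖₊ : ℝ≥0∞)) x ≤
          C * ((∫⁻ y, (‖f y‖₊ : ℝ≥0∞) ^ p ∂μ) ^ (1 / p)) ^ (p * α / nd) *
            (maxFX μ 0 (fun y => (‖f y‖₊ : ℝ≥0∞)) x) ^ (p / q) :=
  statement13_aux μ hμ cl nd hcl hnd hgrowth α p q hα0 hαn hp1 hpn hq
end
end

section
/- Let (X,d,μ) be a space of homogeneous type with μ(B) ≥ c r(B)^n for all balls B, and 0 < α < n. There is a constant C such that for every ball B and every bounded measurable f with compact support contained in X ∖ 4B, one has sup_{x∈B} T_α(|f|)(x) ≤ C ⨍_B T_α(|f|) dμ. -/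
open MeasureTheory Metric Set ENNReal NNReal

noncomputable section

variable {X : Type*} [MetricSpace X] [MeasurableSpace X] [BorelSpace X]

/-! For `x, x' ∈ B` and `y` outside `4B`, the distances `d(x, y)` and `d(x', y)` are comparable
(their ratio lies in `[3/5, 5/3]`), and the ball `B(x', d(x', y))` sits inside `B(x, 4 d(x, y))`.
Hence, by doubling, the kernel of `T_α` at `(x, y)` is bounded by a fixed multiple of the kernel
at `(x', y)`. Integrating in `y` gives `T_α |f| (x) ≤ C T_α |f| (x')` for all `x, x' ∈ B`, and
averaging over `x' ∈ B` gives the claim. -/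

theorem ENNReal.inv_le_mul_inv_of_le_mul {a b k : ℝ≥0∞} (hk0 : k ≠ 0) (hk : k ≠ ∞)
    (h : a ≤ k * b) : b⁻¹ ≤ k * a⁻¹ := by
  calc b⁻¹ = k * (k⁻¹ * b⁻¹) := by rw [← mul_assoc, ENNReal.mul_inv_cancel hk0 hk, one_mul]
    _ = k * (k * b)⁻¹ := by rw [ENNReal.mul_inv (Or.inl hk0) (Or.inl hk)]
    _ ≤ k * a⁻¹ := by gcongr

section FarFromBall

variable {Y : Type*} [PseudoMetricSpace Y] {c x x' y : Y} {r : ℝ}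

theorem dist_le_five_thirds_mul_dist (hx : x ∈ ball c r) (hx' : x' ∈ ball c r)
    (hy : y ∉ ball c (4 * r)) : dist x y ≤ 5 / 3 * dist x' y := by
  rw [mem_ball] at hx hx'
  rw [mem_ball, not_lt] at hy
  linarith [dist_triangle x x' y, dist_triangle x c x', dist_comm c x', dist_triangle y x' c,
    dist_comm x' y]

theorem ball_dist_subset_ball_four_mul_dist (hx : x ∈ ball c r) (hx' : x' ∈ ball c r)
    (hy : y ∉ ball c (4 * r)) : ball x' (dist x' y) ⊆ ball x (4 * dist x y) := by
  rw [mem_ball] at hx hx'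
  rw [mem_ball, not_lt] at hy
  refine ball_subset_ball' ?_
  linarith [dist_triangle x' x y, dist_triangle x' c x, dist_comm x c, dist_triangle y x c,
    dist_comm x y, dist_nonneg (x := x) (y := c)]

theorem dist_pos_of_mem_ball_of_notMem_ball (hx : x ∈ ball c r) (hy : y ∉ ball c (4 * r)) :
    0 < dist x y := by
  rw [mem_ball] at hx
  rw [mem_ball, not_lt] at hy
  linarith [dist_triangle y x c, dist_comm x y, dist_nonneg (x := x) (y := c)]

end FarFromBall

section Kernel

variable {Y : Type*} [MetricSpace Y] [MeasurableSpace Y]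

theorem IsSHT.exists_doubling_const {μ : Measure Y} (hμ : IsSHT μ) :
    ∃ D : ℝ≥0, D ≠ 0 ∧ ∀ (c : Y) (r : ℝ), 0 < r → μ (ball c (2 * r)) ≤ D * μ (ball c r) := by
  obtain ⟨-, -, D, hD⟩ := hμ
  refine ⟨D + 1, by positivity, fun c r hr => (hD c r hr).trans ?_⟩
  gcongr
  exact le_add_of_nonneg_right zero_le_one

theorem measure_ball_four_mul_le {μ : Measure Y} {D : ℝ≥0}
    (hD : ∀ (c : Y) (r : ℝ), 0 < r → μ (ball c (2 * r)) ≤ D * μ (ball c r))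
    (c : Y) {r : ℝ} (hr : 0 < r) : μ (ball c (4 * r)) ≤ (D : ℝ≥0∞) ^ 2 * μ (ball c r) :=
  calc μ (ball c (4 * r)) = μ (ball c (2 * (2 * r))) := by ring_nf
    _ ≤ D * μ (ball c (2 * r)) := hD c (2 * r) (by positivity)
    _ ≤ D * (D * μ (ball c r)) := by gcongr; exact hD c r hr
    _ = (D : ℝ≥0∞) ^ 2 * μ (ball c r) := by ring

def fracKernel (μ : Measure Y) (α : ℝ) (x y : Y) : ℝ≥0∞ :=
  ENNReal.ofReal (dist x y ^ α) / μ (ball x (dist x y))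

theorem TalphaE_eq_lintegral_fracKernel (μ : Measure Y) (α : ℝ) (g : Y → ℝ≥0∞) (x : Y) :
    TalphaE μ α g x = ∫⁻ y, fracKernel μ α x y * g y ∂μ :=
  rfl

variable {μ : Measure Y} {α : ℝ} {D : ℝ≥0} {c x x' y : Y} {r : ℝ}

theorem fracKernel_le_mul_fracKernel (hα : 0 ≤ α) (hD0 : D ≠ 0)
    (hD : ∀ (z : Y) (s : ℝ), 0 < s → μ (ball z (4 * s)) ≤ D * μ (ball z s))
    (hx : x ∈ ball c r) (hx' : x' ∈ ball c r) (hy : y ∉ ball c (4 * r)) :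
    fracKernel μ α x y ≤ ENNReal.ofReal ((5 / 3) ^ α) * D * fracKernel μ α x' y := by
  have hnum : ENNReal.ofReal (dist x y ^ α) ≤
      ENNReal.ofReal ((5 / 3) ^ α) * ENNReal.ofReal (dist x' y ^ α) := by
    rw [← ENNReal.ofReal_mul (by positivity), ← Real.mul_rpow (by norm_num) dist_nonneg]
    gcongr
    exact dist_le_five_thirds_mul_dist hx hx' hy
  have hden : (μ (ball x (dist x y)))⁻¹ ≤ D * (μ (ball x' (dist x' y)))⁻¹ :=
    ENNReal.inv_le_mul_inv_of_le_mul (by exact_mod_cast hD0) ENNReal.coe_ne_top <|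
      (measure_mono (ball_dist_subset_ball_four_mul_dist hx hx' hy)).trans
        (hD x _ (dist_pos_of_mem_ball_of_notMem_ball hx hy))
  calc fracKernel μ α x y
      = ENNReal.ofReal (dist x y ^ α) * (μ (ball x (dist x y)))⁻¹ := div_eq_mul_inv _ _
    _ ≤ ENNReal.ofReal ((5 / 3) ^ α) * ENNReal.ofReal (dist x' y ^ α) *
          (D * (μ (ball x' (dist x' y)))⁻¹) := mul_le_mul' hnum hden
    _ = ENNReal.ofReal ((5 / 3) ^ α) * D * fracKernel μ α x' y := by
      simp only [fracKernel, div_eq_mul_inv]; ring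

theorem TalphaE_le_mul_TalphaE (hα : 0 ≤ α) (hD0 : D ≠ 0)
    (hD : ∀ (z : Y) (s : ℝ), 0 < s → μ (ball z (4 * s)) ≤ D * μ (ball z s))
    {g : Y → ℝ≥0∞} (hg : ∀ y ∈ ball c (4 * r), g y = 0)
    (hx : x ∈ ball c r) (hx' : x' ∈ ball c r) :
    TalphaE μ α g x ≤ ENNReal.ofReal ((5 / 3) ^ α) * D * TalphaE μ α g x' := by
  simp only [TalphaE_eq_lintegral_fracKernel]
  rw [← lintegral_const_mul' _ _ (by finiteness)]
  refine lintegral_mono fun y => ?_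
  by_cases hy : y ∈ ball c (4 * r)
  · simp [hg y hy]
  · rw [← mul_assoc]
    gcongr
    exact fracKernel_le_mul_fracKernel hα hD0 hD hx hx' hy

theorem le_mul_avgBX_of_le_mul [OpensMeasurableSpace Y] (hB0 : μ (ball c r) ≠ 0)
    (hB : μ (ball c r) ≠ ∞) {F : Y → ℝ≥0∞} {C : ℝ≥0∞} (hC : C ≠ ∞)
    (hF : ∀ x' ∈ ball c r, F x ≤ C * F x') : F x ≤ C * avgBX μ c r F := by
  have hint : F x * μ (ball c r) ≤ C * ∫⁻ x' in ball c r, F x' ∂μ := by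
    rw [← setLIntegral_const, ← lintegral_const_mul' _ _ hC]
    exact setLIntegral_mono' measurableSet_ball hF
  calc F x = (μ (ball c r))⁻¹ * (F x * μ (ball c r)) := by
        rw [mul_comm (F x), ← mul_assoc, ENNReal.inv_mul_cancel hB0 hB, one_mul]
    _ ≤ (μ (ball c r))⁻¹ * (C * ∫⁻ x' in ball c r, F x' ∂μ) := by gcongr
    _ = C * avgBX μ c r F := by rw [avgBX]; ring

end Kernel

theorem statement15_general
    (μ : Measure X) (hμ : IsSHT μ)
    (α : ℝ) (hα0 : 0 < α) :
    ∃ C : ℝ≥0, ∀ (c : X) (r : ℝ), 0 < r →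
      ∀ f : X → ℝ, Measurable f → (∃ K : ℝ, ∀ x, |f x| ≤ K) →
        IsCompact (tsupport f) → tsupport f ⊆ (ball c (4 * r))ᶜ →
        ∀ x ∈ ball c r,
          TalphaE μ α (fun y => (‖f y‖₊ : ℝ≥0∞)) x ≤
            C * avgBX μ c r (fun y => TalphaE μ α (fun z => (‖f z‖₊ : ℝ≥0∞)) y) := by
  obtain ⟨D, hD0, hD⟩ := hμ.exists_doubling_const
  refine ⟨Real.toNNReal ((5 / 3) ^ α) * D ^ 2, fun c r hr f _ _ _ hsupp x hx => ?_⟩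
  have hfar : ∀ y ∈ ball c (4 * r), (‖f y‖₊ : ℝ≥0∞) = 0 := fun y hy => by
    simp [image_eq_zero_of_notMem_tsupport fun h => hsupp h hy]
  refine le_mul_avgBX_of_le_mul (hμ.2.1 c r hr).ne' (hμ.1 c r hr).ne ENNReal.coe_ne_top
    fun x' hx' => ?_
  have hcomparable := TalphaE_le_mul_TalphaE hα0.le (pow_ne_zero 2 hD0)
    (fun z s hs => by exact_mod_cast measure_ball_four_mul_le hD z hs) hfar hx hx'
  simpa [ENNReal.ofReal, mul_assoc] using hcomparable

theorem statement15
    (μ : Measure X) (hμ : IsSHT μ)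
    (cl nd : ℝ) (hcl : 0 < cl) (hnd : 0 < nd) (hgrowth : GrowthGE μ cl nd)
    (α : ℝ) (hα0 : 0 < α) (hαn : α < nd) :
    ∃ C : ℝ≥0, ∀ (c : X) (r : ℝ), 0 < r →
      ∀ f : X → ℝ, Measurable f → (∃ K : ℝ, ∀ x, |f x| ≤ K) →
        IsCompact (tsupport f) → tsupport f ⊆ (ball c (4 * r))ᶜ →
        ∀ x ∈ ball c r,
          TalphaE μ α (fun y => (‖f y‖₊ : ℝ≥0∞)) x ≤
            C * avgBX μ c r (fun y => TalphaE μ α (fun z => (‖f z‖₊ : ℝ≥0∞)) y) :=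
  statement15_general μ hμ α hα0
end
end
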